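/- Let R be a Poisson algebra and let a_1, a_2, a_3, a_4, a_5 ∈ R with a_5 ∈ γ_m(R) for some m ≥ 1 (or more generally one of a_1, a_2, a_5 in γ_m(R)). Then {a_1,a_2,a_3}{a_4,a_5} + {a_1,a_2,a_4}{a_3,a_5} ∈ γ_{m+3}(R)·R, where brackets are left-normed: {a,b,c} = {{a,b},c}. -/
import Mathlib


/-- A Poisson algebra structure on a commutative `K`-algebra `R`:
a `K`-bilinear bracket which is antisymmetric, satisfies the Jacobi identity
and the Leibniz rule. -/
structure PoissonStr (K R : Type*) [Field K] [CommRing R] [Algebra K R] where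
  bracket : R →ₗ[K] R →ₗ[K] R
  antisymm : ∀ a b : R, bracket a b = - bracket b a
  jacobi : ∀ a b c : R,
    bracket (bracket a b) c + bracket (bracket b c) a + bracket (bracket c a) b = 0
  leibniz : ∀ a b c : R, bracket (a * b) c = a * bracket b c + b * bracket a c

namespace PoissonStr

variable {K R : Type*} [Field K] [CommRing R] [Algebra K R]

/-- The span `{M, N}` of brackets of elements of two subspaces. -/
def sBr (P : PoissonStr K R) (M N : Submodule K R) : Submodule K R :=
  Submodule.span K {z : R | ∃ m ∈ M, ∃ n ∈ N, z = P.bracket m n}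

/-- Upper Lie powers: `R^(0) = R`, `R^(n+1) = {R^(n), R}·R`. -/
def upper (P : PoissonStr K R) : ℕ → Submodule K R
  | 0 => ⊤
  | n + 1 => P.sBr (upper P n) ⊤ * ⊤

/-- Lower central series of `R` as a Lie algebra: `γ_1 = R`,
`γ_{n+1} = {γ_n, R}` (with the convention `γ_0 = R`). -/
def gamma (P : PoissonStr K R) : ℕ → Submodule K R
  | 0 => ⊤
  | 1 => ⊤
  | n + 2 => P.sBr (gamma P (n + 1)) ⊤

/-- Derived series of `R` as a Lie algebra. -/
def derived (P : PoissonStr K R) : ℕ → Submodule K R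
  | 0 => ⊤
  | n + 1 => P.sBr (derived P n) (derived P n)

/-- Upper derived series: `δ̃_0 = R`, `δ̃_{n+1} = {δ̃_n, δ̃_n}·R`. -/
def uderived (P : PoissonStr K R) : ℕ → Submodule K R
  | 0 => ⊤
  | n + 1 => P.sBr (uderived P n) (uderived P n) * ⊤

end PoissonStr

namespace PoissonStr

variable {K R : Type*} [Field K] [CommRing R] [Algebra K R]

variable (P : PoissonStr K R)

lemma mem_sBr {M N : Submodule K R} {m n : R} (hm : m ∈ M) (hn : n ∈ N) :
    P.bracket m n ∈ P.sBr M N :=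
  Submodule.subset_span ⟨m, hm, n, hn, rfl⟩

lemma sBr_le {M N Q : Submodule K R} (h : ∀ m ∈ M, ∀ n ∈ N, P.bracket m n ∈ Q) :
    P.sBr M N ≤ Q := by
  apply Submodule.span_le.2
  rintro z ⟨a, ha, b, hb, rfl⟩
  exact h a ha b hb

lemma sBr_mono {M M' N N' : Submodule K R} (hM : M ≤ M') (hN : N ≤ N') :
    P.sBr M N ≤ P.sBr M' N' :=
  P.sBr_le fun a ha b hb => P.mem_sBr (hM ha) (hN hb)

lemma bracket_mem_jac {M N L : Submodule K R} {a z : R} (ha : a ∈ M)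
    (hz : z ∈ P.sBr N L) :
    P.bracket a z ∈ P.sBr (P.sBr M N) L ⊔ P.sBr (P.sBr M L) N := by
  induction hz using Submodule.span_induction with
  | mem x hx =>
      obtain ⟨n, hn, l, hl, rfl⟩ := hx
      have e : P.bracket a (P.bracket n l)
          = P.bracket (P.bracket a n) l - P.bracket (P.bracket a l) n := by
        have h1 := P.jacobi n l a
        rw [P.antisymm a (P.bracket n l), P.antisymm l a] at *
        simp only [map_neg, LinearMap.neg_apply] at h1 ⊢
        linear_combination -h1
      rw [e]
      exact sub_mem
        (Submodule.mem_sup_left (P.mem_sBr (P.mem_sBr ha hn) hl))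
        (Submodule.mem_sup_right (P.mem_sBr (P.mem_sBr ha hl) hn))
  | zero => simp
  | add x y hx hy ihx ihy => rw [map_add]; exact add_mem ihx ihy
  | smul c x hx ihx => rw [map_smul]; exact Submodule.smul_mem _ _ ihx

lemma sBr_gamma_top_le : ∀ n, P.sBr (P.gamma n) ⊤ ≤ P.gamma (n + 1)
  | 0 => le_top
  | n + 1 => le_rfl

lemma gamma_succ_le (n : ℕ) : P.gamma (n + 1) ≤ P.gamma n := by
  induction n with
  | zero => exact le_top
  | succ n ih => exact le_trans (P.sBr_mono ih le_rfl) (P.sBr_gamma_top_le n)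

lemma sBr_gamma_gamma (j : ℕ) :
    ∀ i, P.sBr (P.gamma i) (P.gamma (j + 1)) ≤ P.gamma (i + j + 1) := by
  induction j with
  | zero => exact fun i => P.sBr_gamma_top_le i
  | succ j ih =>
      intro i
      apply P.sBr_le
      intro x hx z hz
      have hz' : z ∈ P.sBr (P.gamma (j + 1)) ⊤ := hz
      have key := P.bracket_mem_jac hx hz'
      have h1 : P.sBr (P.sBr (P.gamma i) (P.gamma (j + 1))) ⊤ ≤ P.gamma (i + (j + 1) + 1) :=
        le_trans (P.sBr_mono (ih i) le_rfl) (P.sBr_gamma_top_le (i + j + 1))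
      have h2 : P.sBr (P.sBr (P.gamma i) ⊤) (P.gamma (j + 1)) ≤ P.gamma (i + (j + 1) + 1) := by
        have := le_trans (P.sBr_mono (P.sBr_gamma_top_le i) le_rfl) (ih (i + 1))
        simpa [show i + 1 + j + 1 = i + (j + 1) + 1 by omega] using this
      exact sup_le h1 h2 key

lemma mem_gamma_two (x y : R) : P.bracket x y ∈ P.gamma 2 :=
  P.mem_sBr (Submodule.mem_top) (Submodule.mem_top)

end PoissonStr

/-- if one of `a₁, a₂, a₅` lies in `γ_m(R)` (`m ≥ 1`) then
`{a₁,a₂,a₃}{a₄,a₅} + {a₁,a₂,a₄}{a₃,a₅} ∈ γ_{m+3}(R)·R`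
(brackets left-normed). -/

theorem perm_lemma_one {K R : Type*} [Field K] [CommRing R] [Algebra K R]
    (P : PoissonStr K R) (m : ℕ) (hm : 1 ≤ m) (a1 a2 a3 a4 a5 : R)
    (h : a1 ∈ P.gamma m ∨ a2 ∈ P.gamma m ∨ a5 ∈ P.gamma m) :
    P.bracket (P.bracket a1 a2) a3 * P.bracket a4 a5
      + P.bracket (P.bracket a1 a2) a4 * P.bracket a3 a5
      ∈ P.gamma (m + 3) * ⊤ := by
  set u := P.bracket a1 a2 with hu_def
  -- the three key membership facts
  have memthree :
      P.bracket (P.bracket u (a3 * a4)) a5 ∈ P.gamma (m + 3) ∧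
      P.bracket (P.bracket u a4) a5 ∈ P.gamma (m + 3) ∧
      P.bracket (P.bracket u a3) a5 ∈ P.gamma (m + 3) := by
    have step : ∀ x y : R, x ∈ P.gamma (m + 1) →
        P.bracket (P.bracket x y) a5 ∈ P.gamma (m + 3) := by
      intro x y hx
      have h2 : P.bracket x y ∈ P.gamma (m + 2) :=
        P.sBr_gamma_top_le (m + 1) (P.mem_sBr hx Submodule.mem_top)
      exact P.sBr_gamma_top_le (m + 2) (P.mem_sBr h2 Submodule.mem_top)
    rcases h with h1 | h2 | h5
    · have hu : u ∈ P.gamma (m + 1) :=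
        P.sBr_gamma_top_le m (P.mem_sBr h1 Submodule.mem_top)
      exact ⟨step _ _ hu, step _ _ hu, step _ _ hu⟩
    · have hu : u ∈ P.gamma (m + 1) := by
        have : P.bracket a2 a1 ∈ P.sBr (P.gamma m) ⊤ :=
          P.mem_sBr h2 Submodule.mem_top
        have := neg_mem (P.sBr_gamma_top_le m this)
        rwa [hu_def, P.antisymm a1 a2]
      exact ⟨step _ _ hu, step _ _ hu, step _ _ hu⟩
    · have step5 : ∀ w : R, w ∈ P.gamma 3 →
          P.bracket w a5 ∈ P.gamma (m + 3) := by
        intro w hw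
        have := P.sBr_gamma_gamma (m - 1) 3 (P.mem_sBr hw (show a5 ∈ P.gamma (m - 1 + 1) by
          rwa [Nat.sub_add_cancel hm]))
        rwa [show 3 + (m - 1) + 1 = m + 3 by omega] at this
      have hu2 : u ∈ P.gamma 2 := P.mem_gamma_two a1 a2
      have g3 : ∀ y : R, P.bracket u y ∈ P.gamma 3 := fun y =>
        P.sBr_gamma_top_le 2 (P.mem_sBr hu2 Submodule.mem_top)
      exact ⟨step5 _ (g3 _), step5 _ (g3 _), step5 _ (g3 _)⟩
  obtain ⟨hA, hX, hY⟩ := memthree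
  -- the algebraic identity
  have e : P.bracket u (a3 * a4) = a3 * P.bracket u a4 + a4 * P.bracket u a3 := by
    rw [P.antisymm u (a3 * a4), P.leibniz, P.antisymm a4 u, P.antisymm a3 u]
    ring
  have key : P.bracket (P.bracket u (a3 * a4)) a5
      = a3 * P.bracket (P.bracket u a4) a5 + P.bracket u a4 * P.bracket a3 a5
        + (a4 * P.bracket (P.bracket u a3) a5 + P.bracket u a3 * P.bracket a4 a5) := by
    rw [e, map_add, LinearMap.add_apply, P.leibniz, P.leibniz]
  have main_id : P.bracket u a3 * P.bracket a4 a5 + P.bracket u a4 * P.bracket a3 a5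
      = P.bracket (P.bracket u (a3 * a4)) a5
        - a3 * P.bracket (P.bracket u a4) a5 - a4 * P.bracket (P.bracket u a3) a5 := by
    linear_combination -key
  rw [main_id]
  have mA : P.bracket (P.bracket u (a3 * a4)) a5 ∈ P.gamma (m + 3) * ⊤ := by
    simpa using Submodule.mul_mem_mul hA (Submodule.mem_top (x := (1 : R)))
  have mX : a3 * P.bracket (P.bracket u a4) a5 ∈ P.gamma (m + 3) * ⊤ := by
    rw [mul_comm a3 _]
    exact Submodule.mul_mem_mul hX Submodule.mem_top
  have mY : a4 * P.bracket (P.bracket u a3) a5 ∈ P.gamma (m + 3) * ⊤ := by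
    rw [mul_comm a4 _]
    exact Submodule.mul_mem_mul hY Submodule.mem_top
  exact sub_mem (sub_mem mA mX) mY
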